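/- For every k ≥ 2, writing e_k(w) = Σ_{i=0}^{k-1} B_{k,i}·w^{2^i} in A[w], the coefficients are given by: B_{k,k-1} = 1; B_{k,i} = S_{k-2,k-2-i}(D₂,…,D_{k-1}) + S_{k-2,k-1-i}(D₂,…,D_{k-1}) for 1 ≤ i ≤ k-2; and B_{k,0} = D_{k-1}·D_{k-2}⋯D₂. -/

import Mathlib

noncomputable section

open Polynomial
open scoped Classical

/-- The defining polynomial `Y² + Y + (X³ + X + 1)` over `𝔽₂[X]`,
viewed as a polynomial in `Y` with coefficients in `𝔽₂[X]`. -/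
def curveEq : Polynomial (Polynomial (ZMod 2)) :=
  X ^ 2 + X + C (X ^ 3 + X + 1)

/-- The ring `A = 𝔽₂[X,Y]/(Y² + Y + X³ + X + 1)`. -/
abbrev A : Type := AdjoinRoot curveEq

/-- The image `x` of `X` in `A`. -/
def aX : A := AdjoinRoot.of curveEq (X : Polynomial (ZMod 2))

/-- The image `y` of `Y` in `A`. -/
def aY : A := AdjoinRoot.root curveEq

/-- The bracket `[j]_x = x^{2^j} + x ∈ A`. -/
def brX (j : ℕ) : A := aX ^ 2 ^ j + aX

/-- The monomials `xⁱyʲ` with `j ∈ {0,1}` and `2i + 3j < k`. -/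
def monoSet (k : ℕ) : Finset A :=
  ((Finset.range k ×ˢ Finset.range 2).filter fun p => 2 * p.1 + 3 * p.2 < k).image
    fun p => aX ^ p.1 * aY ^ p.2

/-- `A_{<k}` : the `𝔽₂`-linear span of the monomials `xⁱyʲ` with `j ∈ {0,1}`
and `2i + 3j < k`, realized as the finite set of all subset sums. -/
def Alt (k : ℕ) : Finset A := (monoSet k).powerset.image fun s => s.sum id

/-- `t_k := x^{k/2}` if `k` is even, `t_k := y·x^{(k-3)/2}` if `k` is odd. -/
def tk (k : ℕ) : A := if Even k then aX ^ (k / 2) else aY * aX ^ ((k - 3) / 2)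

/-- `e_k(w) := ∏_{a ∈ A_{<k}} (w + a) ∈ A[w]`. -/
def ePoly (k : ℕ) : Polynomial A := ∏ a ∈ Alt k, (X + C a)

/-- `D_k := e_k(t_k)`, the product of all monic elements of `A` of degree `k`. -/
def Dk (k : ℕ) : A := (ePoly k).eval (tk k)

variable (K : Type) [Field K] [Algebra A K]

/-- The coefficients `a_j = 1/d_j` of the exponential function:
`a₀ = a₁ = 1` and `a_j = ([1]_x·a_{j-1}² + a_{j-2}⁴)/[j]_x` for `j ≥ 2`. -/
def aSeq : ℕ → K
  | 0 => 1
  | 1 => 1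
  | (j + 2) =>
      (algebraMap A K (brX 1) * (aSeq (j + 1)) ^ 2 + (aSeq j) ^ 4) /
        algebraMap A K (brX (j + 2))

/-- The coefficients `b_j = 1/ℓ_j` of the logarithm function:
`b₀ = b₁ = 1` and `b_j = ([1]_x^{2^{j-1}}·b_{j-1} + b_{j-2})/[j]_x` for `j ≥ 2`. -/
def bSeq : ℕ → K
  | 0 => 1
  | 1 => 1
  | (j + 2) =>
      (algebraMap A K (brX 1) ^ 2 ^ (j + 1) * bSeq (j + 1) + bSeq j) /
        algebraMap A K (brX (j + 2))

/-- `p_k(w) := Σ_{j=0}^{k} a_j·b_{k-j}^{2^j}·w^{2^j} ∈ K[w]`. -/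
def pPoly (k : ℕ) : Polynomial K :=
  ∑ j ∈ Finset.range (k + 1), C (aSeq K j * (bSeq K (k - j)) ^ 2 ^ j) * X ^ 2 ^ j

/-- `S_{n,r}(x₁,…,x_n) := Σ_{n ≥ i₁ > i₂ > … > i_r ≥ 1} ∏_{j=1}^{r}
x_{i_j}^{2^{n-j+1-i_j}}`, with `S_{n,0} = 1` and `S_{n,r} = 0` for `r > n`. -/
def Ssum (R : Type*) [CommRing R] (n r : ℕ) (x : ℕ → R) : R :=
  ∑ f ∈ Finset.univ.filter
      (fun f : Fin r → Fin (n + 1) => StrictAnti f ∧ ∀ j, 1 ≤ (f j : ℕ)),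
    ∏ j : Fin r, x (f j) ^ 2 ^ (n - (j : ℕ) - (f j : ℕ))


/-!
Since `1, y` is a basis of `A` over `𝔽₂[x]`, the monomials `xⁱyʲ` (`j < 2`) are linearly
independent over `𝔽₂`. Hence `A_{<k+1} = A_{<k} ⊔ (t_k + A_{<k})`, and
`e_{k+1}(w) = e_k(w) · e_k(w + t_k)`.

Inductively `e_{n+2} = L_n ∘ (w² + w)`, where `L₀ = w` and `L_{m+1} = L_m² + D_{m+2} L_m`. In
characteristic `2` this composite is additive, so `e_k(w + t_k) = e_k(w) + D_k` and
`e_{k+1} = e_k² + D_k e_k`, which carries the induction forward.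

Splitting the sum `S_{n+1,r+1}` according to whether `i₁ = n + 1` gives
`S_{n+1,r+1} = S_{n,r+1}² + x_{n+1} S_{n,r}`. So the coefficient of `w^{2^j}` in `L_n` is
`S_{n,n-j}`, and composing with `w² + w` adds each coefficient to the next one.
-/

lemma Fin.val_add_val_lt_of_strictAnti {r N : ℕ} {f : Fin r → Fin N} (hf : StrictAnti f)
    (j : Fin r) : (f j : ℕ) + j < N := by
  obtain ⟨m, hm⟩ := j
  induction m with
  | zero => exact (f _).isLt
  | succ m ih =>
    have hlt : f ⟨m + 1, hm⟩ < f ⟨m, by omega⟩ := hf (Fin.mk_lt_mk.mpr m.lt_succ_self)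
    have := ih (by omega)
    rw [Fin.lt_def] at hlt
    simp only at this ⊢
    omega

lemma LinearIndepOn.injOn_sum_powerset {R M : Type*} [Ring R] [Nontrivial R] [AddCommGroup M]
    [Module R M] [DecidableEq M] {s : Finset M} (hs : LinearIndepOn R id (s : Set M)) :
    Set.InjOn (fun t => t.sum id) (s.powerset : Set (Finset M)) := by
  intro t ht u hu htu
  simp only [Finset.coe_powerset, Set.mem_preimage, Set.mem_powerset_iff, Finset.coe_subset]
    at ht hu
  have hcoeff := linearIndepOn_finset_iff.mp hs
    (fun a => (if a ∈ t then 1 else 0) - (if a ∈ u then 1 else 0)) (by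
      simp only [sub_smul, ite_smul, one_smul, zero_smul, Finset.sum_sub_distrib,
        Finset.sum_ite_mem, Finset.inter_eq_right.mpr ht, Finset.inter_eq_right.mpr hu, id]
      exact sub_eq_zero.mpr htu)
  ext a
  by_cases ha : a ∈ s
  · have := hcoeff a ha
    split_ifs at this <;> simp_all
  · exact iff_of_false (fun h => ha (ht h)) (fun h => ha (hu h))

def decTuples (n r : ℕ) : Finset (Fin r → Fin (n + 1)) :=
  Finset.univ.filter fun f => StrictAnti f ∧ ∀ j, 1 ≤ (f j : ℕ)

lemma mem_decTuples {n r : ℕ} {f : Fin r → Fin (n + 1)} :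
    f ∈ decTuples n r ↔ StrictAnti f ∧ ∀ j, 1 ≤ (f j : ℕ) := by
  simp [decTuples]

lemma castSucc_comp_mem_decTuples {n r : ℕ} {g : Fin r → Fin (n + 1)}
    (hg : g ∈ decTuples n r) : Fin.castSucc ∘ g ∈ decTuples (n + 1) r := by
  rw [mem_decTuples] at hg ⊢
  exact ⟨Fin.strictMono_castSucc.comp_strictAnti hg.1, hg.2⟩

lemma filter_decTuples_ne_last (n r : ℕ) :
    (decTuples (n + 1) (r + 1)).filter (fun f => f 0 ≠ Fin.last (n + 1)) =
      (decTuples n (r + 1)).image (Fin.castSucc ∘ ·) := by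
  ext f
  simp only [Finset.mem_filter, Finset.mem_image]
  constructor
  · rintro ⟨hf, h0⟩
    have hne : ∀ j, f j ≠ Fin.last (n + 1) := fun j =>
      ne_of_lt ((mem_decTuples.mp hf).1.antitone (Fin.zero_le j) |>.trans_lt
        (Fin.lt_last_iff_ne_last.mpr h0))
    refine ⟨fun j => (f j).castPred (hne j), ?_, funext fun j => Fin.castSucc_castPred _ _⟩
    obtain ⟨hanti, hpos⟩ := mem_decTuples.mp hf
    exact mem_decTuples.mpr ⟨fun a b hab => Fin.castPred_lt_castPred_iff.mpr (hanti hab), hpos⟩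
  · rintro ⟨g, hg, rfl⟩
    exact ⟨castSucc_comp_mem_decTuples hg, Fin.castSucc_ne_last _⟩

lemma filter_decTuples_eq_last (n r : ℕ) :
    (decTuples (n + 1) (r + 1)).filter (fun f => f 0 = Fin.last (n + 1)) =
      (decTuples n r).image (fun g => Fin.cons (Fin.last (n + 1)) (Fin.castSucc ∘ g)) := by
  ext f
  simp only [Finset.mem_filter, Finset.mem_image]
  constructor
  · rintro ⟨hf, h0⟩
    obtain ⟨hanti, hpos⟩ := mem_decTuples.mp hf
    have hne : ∀ j : Fin r, f j.succ ≠ Fin.last (n + 1) := fun j =>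
      ne_of_lt (h0 ▸ hanti (Fin.succ_pos j))
    refine ⟨fun j => (f j.succ).castPred (hne j), ?_, ?_⟩
    · exact mem_decTuples.mpr ⟨fun a b hab => Fin.castPred_lt_castPred_iff.mpr
        (hanti (Fin.succ_lt_succ_iff.mpr hab)), fun j => hpos j.succ⟩
    · refine funext fun j => Fin.cases ?_ (fun j => ?_) j
      · simp [h0]
      · simp
  · rintro ⟨g, hg, rfl⟩
    obtain ⟨hanti, hpos⟩ := mem_decTuples.mp (castSucc_comp_mem_decTuples hg)
    refine ⟨mem_decTuples.mpr ⟨fun a b hab => ?_, fun j => ?_⟩, rfl⟩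
    · induction b using Fin.cases with
      | zero => exact absurd hab (Fin.not_lt_zero a)
      | succ b =>
        induction a using Fin.cases with
        | zero => simp
        | succ a => simpa using hanti (Fin.succ_lt_succ_iff.mp hab)
    · refine Fin.cases ?_ (fun j => ?_) j
      · simp
      · simpa using hpos j

section Ssum

variable {R : Type*} [CommRing R] (x : ℕ → R)

lemma Ssum_eq_sum_decTuples (n r : ℕ) :
    Ssum R n r x = ∑ f ∈ decTuples n r, ∏ j : Fin r, x (f j) ^ 2 ^ (n - j - f j) := rfl

lemma Ssum_zero_right (n : ℕ) : Ssum R n 0 x = 1 := by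
  simp [Ssum, Finset.filter_true_of_mem, Subsingleton.strictAnti]

lemma Ssum_of_lt {n r : ℕ} (h : n < r) : Ssum R n r x = 0 := by
  refine Finset.sum_eq_zero fun f hf => absurd (mem_decTuples.mp hf) ?_
  rintro ⟨hanti, hpos⟩
  have := Fin.val_add_val_lt_of_strictAnti hanti ⟨r - 1, by omega⟩
  have := hpos ⟨r - 1, by omega⟩
  simp only at *
  omega

lemma Ssum_succ_succ [CharP R 2] (n r : ℕ) :
    Ssum R (n + 1) (r + 1) x = Ssum R n (r + 1) x ^ 2 + x (n + 1) * Ssum R n r x := by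
  rw [Ssum_eq_sum_decTuples,
    ← Finset.sum_filter_not_add_sum_filter _ (fun f => f 0 = Fin.last (n + 1)),
    filter_decTuples_ne_last, filter_decTuples_eq_last,
    Finset.sum_image fun _ _ _ _ h => Fin.castSucc_injective _ |>.comp_left h,
    Finset.sum_image fun _ _ _ _ h => (Fin.castSucc_injective _).comp_left
      (Fin.cons_right_injective _ h),
    Ssum_eq_sum_decTuples, Ssum_eq_sum_decTuples, CharTwo.sum_sq, Finset.mul_sum]
  congr 1
  · refine Finset.sum_congr rfl fun g hg => ?_
    rw [← Finset.prod_pow]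
    refine Finset.prod_congr rfl fun j _ => ?_
    have := Fin.val_add_val_lt_of_strictAnti (mem_decTuples.mp hg).1 j
    rw [← pow_mul, ← pow_succ, Function.comp_apply, Fin.val_castSucc]
    congr 2
    omega
  · refine Finset.sum_congr rfl fun g _ => ?_
    simp [Fin.prod_univ_succ]

lemma Ssum_self [CharP R 2] (n : ℕ) : Ssum R n n x = ∏ m ∈ Finset.Icc 1 n, x m := by
  induction n with
  | zero => simp [Ssum_zero_right]
  | succ n ih =>
    rw [Ssum_succ_succ, ih, Ssum_of_lt x n.lt_succ_self, Finset.prod_Icc_succ_top (by omega)]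
    ring

end Ssum

lemma comp_X_add_C_of_comp_add {R : Type*} [CommRing R] {p : R[X]}
    (hp : ∀ f g : R[X], p.comp (f + g) = p.comp f + p.comp g) (t : R) :
    p.comp (X + C t) = p + C (p.eval t) := by
  rw [hp, comp_X, comp_C]

section quadIter

variable {R : Type*} [CommRing R] [CharP R 2] (x : ℕ → R)

lemma coeff_sq_of_charTwo (p : R[X]) (m : ℕ) :
    (p ^ 2).coeff m = if 2 ∣ m then p.coeff (m / 2) ^ 2 else 0 := by
  rw [← map_frobenius_expand, coeff_map, coeff_expand two_pos]
  split_ifs <;> simp [frobenius_def]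

/-- `L_n = (w² + x_n w) ∘ ⋯ ∘ (w² + x_1 w)`. -/
def quadIter : ℕ → R[X]
  | 0 => X
  | n + 1 => quadIter n ^ 2 + C (x (n + 1)) * quadIter n

lemma quadIter_comp_add (n : ℕ) (f g : R[X]) :
    (quadIter x n).comp (f + g) = (quadIter x n).comp f + (quadIter x n).comp g := by
  induction n with
  | zero => simp [quadIter]
  | succ n ih =>
    simp only [quadIter, add_comp, mul_comp, pow_comp, C_comp, ih, CharTwo.add_sq]
    ring

lemma coeff_quadIter_two_pow (n j : ℕ) :
    (quadIter x n).coeff (2 ^ j) = if j ≤ n then Ssum R n (n - j) x else 0 := by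
  induction n generalizing j with
  | zero =>
    rcases j with _ | j
    · simp [quadIter, Ssum_zero_right]
    · simp [quadIter, coeff_X, (Nat.one_lt_two_pow_iff.mpr j.succ_ne_zero).ne]
  | succ n ih =>
    rw [quadIter, coeff_add, coeff_C_mul, coeff_sq_of_charTwo, ih]
    rcases j with _ | j
    · rw [if_neg (by norm_num), if_pos n.zero_le, if_pos (n + 1).zero_le, Nat.sub_zero,
        Nat.sub_zero, Ssum_succ_succ, Ssum_of_lt x n.lt_succ_self]
      ring
    · rw [if_pos (dvd_pow_self 2 j.succ_ne_zero), Nat.pow_succ, Nat.mul_div_cancel _ two_pos, ih]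
      rcases lt_trichotomy j n with hj | rfl | hj
      · rw [if_pos hj.le, if_pos (by omega : j + 1 ≤ n), if_pos (by omega : j + 1 ≤ n + 1),
          show n + 1 - (j + 1) = n - j by omega,
          show n - j = n - (j + 1) + 1 by omega, Ssum_succ_succ]
      · simp [Ssum_zero_right]
      · rw [if_neg (by omega), if_neg (by omega), if_neg (by omega)]
        ring

lemma quadIter_comp_X_sq_add_X (n : ℕ) :
    (quadIter x n).comp (X ^ 2 + X) = expand R 2 (quadIter x n) + quadIter x n := by
  rw [quadIter_comp_add, comp_X, expand_eq_comp_X_pow]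

lemma coeff_quadIter_comp_two_pow_succ (n j : ℕ) :
    ((quadIter x n).comp (X ^ 2 + X)).coeff (2 ^ (j + 1)) =
      (quadIter x n).coeff (2 ^ j) + (quadIter x n).coeff (2 ^ (j + 1)) := by
  rw [quadIter_comp_X_sq_add_X, coeff_add, Nat.pow_succ, coeff_expand_mul two_pos]

lemma coeff_quadIter_comp_one (n : ℕ) :
    ((quadIter x n).comp (X ^ 2 + X)).coeff 1 = Ssum R n n x := by
  rw [quadIter_comp_X_sq_add_X, coeff_add, coeff_expand two_pos, if_neg (by norm_num), zero_add,
    ← pow_zero 2, coeff_quadIter_two_pow, if_pos n.zero_le, Nat.sub_zero]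

end quadIter

lemma curveEq_monic : curveEq.Monic := by
  unfold curveEq; monicity!

lemma curveEq_natDegree : curveEq.natDegree = 2 := by
  unfold curveEq; compute_degree!

instance : Nontrivial A :=
  AdjoinRoot.nontrivial _ <| by
    rw [degree_eq_natDegree curveEq_monic.ne_zero, curveEq_natDegree]
    decide

instance : CharP A 2 := charP_of_injective_algebraMap' (ZMod 2) 2

def mon (p : ℕ × ℕ) : A := aX ^ p.1 * aY ^ p.2

lemma linearIndepOn_mon : LinearIndepOn (ZMod 2) mon {p | p.2 < 2} := by
  have hY : LinearIndependent (ZMod 2)[X] fun j : Fin 2 => aY ^ (j : ℕ) := by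
    have := ((AdjoinRoot.powerBasis' curveEq_monic).basis.linearIndependent).comp
      (Fin.cast curveEq_natDegree.symm) (Fin.cast_injective _)
    convert this using 1
    · funext j
      simp only [Function.comp_apply, PowerBasis.coe_basis, AdjoinRoot.powerBasis'_gen]
      rfl
    · rfl
  have hXY := linearIndependent_smul (basisMonomials (ZMod 2)).linearIndependent hY
  have hrange : Set.range (fun p : ℕ × Fin 2 => (p.1, (p.2 : ℕ))) = {p | p.2 < 2} := by
    ext ⟨i, j⟩
    simp only [Set.mem_range, Set.mem_ofPred_eq, Prod.mk.injEq]
    exact ⟨by rintro ⟨⟨i, j⟩, rfl, rfl⟩; exact j.isLt,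
      fun hj => ⟨⟨i, ⟨j, hj⟩⟩, rfl, rfl⟩⟩
  rw [← hrange, linearIndepOn_range_iff fun p q h => by
    simpa [Prod.ext_iff, Fin.ext_iff] using h]
  convert hXY using 1
  ext p
  simp [mon, aX, coe_basisMonomials, Algebra.smul_def, ← C_mul_X_pow_eq_monomial]

def monExps (k : ℕ) : Finset (ℕ × ℕ) :=
  (Finset.range k ×ˢ Finset.range 2).filter fun p => 2 * p.1 + 3 * p.2 < k

lemma monoSet_eq_image (k : ℕ) : monoSet k = (monExps k).image mon := rfl

lemma mem_monExps {k : ℕ} {p : ℕ × ℕ} :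
    p ∈ monExps k ↔ p.2 < 2 ∧ 2 * p.1 + 3 * p.2 < k := by
  simp only [monExps, Finset.mem_filter, Finset.mem_product, Finset.mem_range]
  omega

def tkExps (k : ℕ) : ℕ × ℕ := if Even k then (k / 2, 0) else ((k - 3) / 2, 1)

lemma mon_tkExps (k : ℕ) : mon (tkExps k) = tk k := by
  unfold tkExps tk
  split_ifs <;> simp [mon, mul_comm]

lemma monExps_succ {k : ℕ} (hk : 2 ≤ k) : monExps (k + 1) = insert (tkExps k) (monExps k) := by
  ext ⟨i, j⟩
  rw [Finset.mem_insert, mem_monExps, mem_monExps, tkExps]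
  rcases Nat.even_or_odd k with h | h
  · rw [if_pos h, Prod.mk.injEq]
    have := Nat.even_iff.mp h
    omega
  · rw [if_neg (Nat.not_even_iff_odd.mpr h), Prod.mk.injEq]
    have := Nat.odd_iff.mp h
    omega

lemma tkExps_notMem_monExps (k : ℕ) : tkExps k ∉ monExps k := by
  rw [mem_monExps, tkExps]
  rcases Nat.even_or_odd k with h | h
  · rw [if_pos h]
    have := Nat.even_iff.mp h
    omega
  · rw [if_neg (Nat.not_even_iff_odd.mpr h)]
    have := Nat.odd_iff.mp h
    omega

lemma monoSet_succ {k : ℕ} (hk : 2 ≤ k) : monoSet (k + 1) = insert (tk k) (monoSet k) := by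
  rw [monoSet_eq_image, monExps_succ hk, Finset.image_insert, mon_tkExps, monoSet_eq_image]

lemma monExps_subset (k : ℕ) : (monExps k : Set (ℕ × ℕ)) ⊆ {p | p.2 < 2} :=
  fun _ hp => (mem_monExps.mp hp).1

lemma tk_notMem_monoSet (k : ℕ) : tk k ∉ monoSet k := by
  rw [monoSet_eq_image, ← mon_tkExps, Finset.mem_image]
  rintro ⟨p, hp, hpt⟩
  have htk : (tkExps k).2 < 2 := by unfold tkExps; split_ifs <;> simp
  rw [linearIndepOn_mon.injOn (monExps_subset k hp) htk hpt] at hp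
  exact tkExps_notMem_monExps k hp

lemma linearIndepOn_monoSet (k : ℕ) : LinearIndepOn (ZMod 2) id (monoSet k : Set A) := by
  rw [monoSet_eq_image, Finset.coe_image]
  exact (linearIndepOn_mon.mono (monExps_subset k)).id_image

lemma prod_Alt {M : Type*} [CommMonoid M] (k : ℕ) (f : A → M) :
    ∏ a ∈ Alt k, f a = ∏ s ∈ (monoSet k).powerset, f (s.sum id) :=
  Finset.prod_image (linearIndepOn_monoSet k).injOn_sum_powerset

lemma ePoly_succ {k : ℕ} (hk : 2 ≤ k) :
    ePoly (k + 1) = ePoly k * (ePoly k).comp (X + C (tk k)) := by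
  simp only [ePoly, prod_Alt, monoSet_succ hk, Finset.prod_powerset_insert (tk_notMem_monoSet k),
    prod_comp]
  congr 1
  refine Finset.prod_congr rfl fun s hs => ?_
  rw [Finset.sum_insert fun h => tk_notMem_monoSet k (Finset.mem_powerset.mp hs h)]
  simp [add_assoc]

lemma ePoly_two : ePoly 2 = X ^ 2 + X := by
  have : monoSet 2 = insert 1 ∅ := by
    rw [monoSet_eq_image, show monExps 2 = {(0, 0)} by decide]
    simp [mon]
  rw [ePoly, prod_Alt, this, Finset.prod_powerset_insert (Finset.notMem_empty 1)]
  simp only [Finset.powerset_empty, Finset.prod_singleton, Finset.sum_empty, id, map_zero,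
    add_zero, Finset.insert_empty, Finset.sum_singleton, map_one]
  ring

lemma ePoly_eq_quadIter_comp (n : ℕ) :
    ePoly (n + 2) = (quadIter (fun m => Dk (m + 1)) n).comp (X ^ 2 + X) := by
  induction n with
  | zero => simp [quadIter, ePoly_two]
  | succ n ih =>
    set L := quadIter (fun m => Dk (m + 1)) n
    have hadd : ∀ f g : A[X], (L.comp (X ^ 2 + X)).comp (f + g) =
        (L.comp (X ^ 2 + X)).comp f + (L.comp (X ^ 2 + X)).comp g := by
      intro f g
      simp only [comp_assoc, add_comp, pow_comp, X_comp]
      rw [← quadIter_comp_add]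
      congr 1
      rw [CharTwo.add_sq]
      ring
    have hshift : (ePoly (n + 2)).comp (X + C (tk (n + 2))) = ePoly (n + 2) + C (Dk (n + 2)) := by
      rw [Dk, ih]
      exact comp_X_add_C_of_comp_add hadd _
    rw [show n + 1 + 2 = n + 2 + 1 from rfl, ePoly_succ (by omega), hshift, ih]
    simp only [L, quadIter, add_comp, mul_comp, pow_comp, C_comp]
    ring

/-- For `k ≥ 2`, writing `e_k(w) = Σ_{i=0}^{k-1} B_{k,i}·w^{2^i}` in `A[w]`,
the coefficients are `B_{k,k-1} = 1`;
`B_{k,i} = S_{k-2,k-2-i}(D₂,…,D_{k-1}) + S_{k-2,k-1-i}(D₂,…,D_{k-1})` for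
`1 ≤ i ≤ k-2`; and `B_{k,0} = D_{k-1}·D_{k-2}⋯D₂`. -/
theorem stmt14 (k : ℕ) (hk : 2 ≤ k) :
    (ePoly k).coeff (2 ^ (k - 1)) = 1 ∧
    (∀ i : ℕ, 1 ≤ i → i ≤ k - 2 →
      (ePoly k).coeff (2 ^ i) =
        Ssum A (k - 2) (k - 2 - i) (fun m => Dk (m + 1)) +
          Ssum A (k - 2) (k - 1 - i) (fun m => Dk (m + 1))) ∧
    (ePoly k).coeff 1 = ∏ j ∈ Finset.Icc 2 (k - 1), Dk j := by
  obtain ⟨n, rfl⟩ : ∃ n, k = n + 2 := ⟨k - 2, by omega⟩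
  simp only [ePoly_eq_quadIter_comp, Nat.add_sub_cancel, show n + 2 - 1 = n + 1 by omega]
  refine ⟨?_, fun i hi1 hin => ?_, ?_⟩
  · rw [coeff_quadIter_comp_two_pow_succ, coeff_quadIter_two_pow, coeff_quadIter_two_pow,
      if_pos le_rfl, if_neg (by omega), Nat.sub_self, Ssum_zero_right, add_zero]
  · obtain ⟨j, rfl⟩ : ∃ j, i = j + 1 := ⟨i - 1, by omega⟩
    rw [coeff_quadIter_comp_two_pow_succ, coeff_quadIter_two_pow, coeff_quadIter_two_pow,
      if_pos (by omega), if_pos hin, add_comm, show n + 1 - (j + 1) = n - j by omega]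
  · rw [coeff_quadIter_comp_one, Ssum_self,
      show Finset.Icc 2 (n + 1) = (Finset.Icc 1 n).map (addRightEmbedding 1) by simp,
      Finset.prod_map]
    rfl
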